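/- arXiv:1402.1865 — 9 statements merged into one kernel-verified Lean document; each statement's English description precedes it below -/
import Mathlib

section
/- Let α = s + t·τ + u·τ² + v·τ³ ∈ R with s, t, u, v ∈ ℤ. Then τ divides α in R if and only if 4 divides s. -/
open Polynomial

noncomputable def P (μ : ℤ) : ℤ[X] := X ^ 4 - C μ * X ^ 3 - C (2 * μ) * X + 4

noncomputable abbrev Rg (μ : ℤ) := AdjoinRoot (P μ)

noncomputable def tau (μ : ℤ) : Rg μ := AdjoinRoot.root (P μ)

namespace AdjoinRoot

variable {R : Type*} [CommRing R]

theorem root_dvd_of_coeff_zero (f : R[X]) : root f ∣ of f (f.coeff 0) := by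
  have h := map_dvd (mk f) (X_dvd_sub_C (p := f))
  rwa [mk_X, map_sub, mk_self, mk_C, zero_sub, dvd_neg] at h

theorem root_dvd_of_iff_coeff_zero_dvd (f : R[X]) (r : R) :
    root f ∣ of f r ↔ f.coeff 0 ∣ r := by
  constructor
  · rintro ⟨c, hc⟩
    -- `root f ↦ 0` is a well-defined map to `R ⧸ (f.coeff 0)`, since `f(0) = f.coeff 0`.
    let π : AdjoinRoot f →+* R ⧸ Ideal.span {f.coeff 0} :=
      lift (Ideal.Quotient.mk _) 0 (by
        rw [eval₂_at_zero, Ideal.Quotient.eq_zero_iff_mem]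
        exact Ideal.mem_span_singleton_self _)
    have hr : Ideal.Quotient.mk (Ideal.span {f.coeff 0}) r = 0 := by
      simpa only [π, lift_of, map_mul, lift_root, zero_mul] using congrArg π hc
    rwa [Ideal.Quotient.eq_zero_iff_mem, Ideal.mem_span_singleton] at hr
  · intro h
    exact (root_dvd_of_coeff_zero f).trans (map_dvd (of f) h)

end AdjoinRoot

theorem coeff_zero_P (μ : ℤ) : (P μ).coeff 0 = 4 := by
  simp [P]

theorem stmt0_general (μ : ℤ) (s t u v : ℤ) :
    tau μ ∣ ((s : Rg μ) + (t : Rg μ) * tau μ + (u : Rg μ) * tau μ ^ 2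
      + (v : Rg μ) * tau μ ^ 3) ↔ (4 : ℤ) ∣ s := by
  have hα : (s : Rg μ) + (t : Rg μ) * tau μ + (u : Rg μ) * tau μ ^ 2 + (v : Rg μ) * tau μ ^ 3
      = AdjoinRoot.of (P μ) s + tau μ * (t + u * tau μ + v * tau μ ^ 2) := by
    rw [eq_intCast]
    ring
  rw [hα, dvd_add_left (dvd_mul_right _ _), tau, AdjoinRoot.root_dvd_of_iff_coeff_zero_dvd,
    coeff_zero_P]

/-- Divisibility by τ: for `α = s + t·τ + u·τ² + v·τ³` with integer coefficients,
`τ ∣ α` in `R` if and only if `4 ∣ s`. -/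
theorem stmt0 (μ : ℤ) (hμ : μ = 1 ∨ μ = -1) (s t u v : ℤ) :
    tau μ ∣ ((s : Rg μ) + (t : Rg μ) * tau μ + (u : Rg μ) * tau μ ^ 2
      + (v : Rg μ) * tau μ ^ 3) ↔ (4 : ℤ) ∣ s :=
  stmt0_general μ s t u v
end

section
/- Let α = s + t·τ + u·τ² + v·τ³ ∈ R with s, t, u, v ∈ ℤ. If τ² divides α in R, then 4 divides s and 8 divides μ·s + 2·t (equivalently, 4 divides μ·(s/2) + t). -/
open Polynomial

/-- If `τ²` divides `α = s + t·τ + u·τ² + v·τ³` in `R`, then `4 ∣ s` and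
`8 ∣ μ·s + 2·t` (equivalently `4 ∣ μ·(s/2) + t`). -/
theorem stmt2 (μ : ℤ) (hμ : μ = 1 ∨ μ = -1) (s t u v : ℤ)
    (h : tau μ ^ 2 ∣ ((s : Rg μ) + (t : Rg μ) * tau μ + (u : Rg μ) * tau μ ^ 2
      + (v : Rg μ) * tau μ ^ 3)) :
    (4 : ℤ) ∣ s ∧ (8 : ℤ) ∣ μ * s + 2 * t := by
  obtain ⟨β, hβ⟩ := h
  obtain ⟨q, rfl⟩ := AdjoinRoot.mk_surjective β
  have hmk : AdjoinRoot.mk (P μ)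
      (C s + C t * X + C u * X ^ 2 + C v * X ^ 3 - X ^ 2 * q) = 0 := by
    have hc : ∀ a : ℤ, AdjoinRoot.mk (P μ) (C a) = (a : Rg μ) := by
      intro a
      simp [AdjoinRoot.mk_C, map_intCast]
    simp only [map_sub, map_add, map_mul, map_pow, AdjoinRoot.mk_X, hc]
    rw [show AdjoinRoot.root (P μ) = tau μ from rfl, ← hβ]
    ring
  rw [AdjoinRoot.mk_eq_zero] at hmk
  obtain ⟨g, hg⟩ := hmk
  have h0 := congrArg (fun p => Polynomial.coeff p 0) hg
  have h1 := congrArg (fun p => Polynomial.coeff p 1) hg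
  simp [P, coeff_mul, Finset.Nat.sum_antidiagonal_eq_sum_range_succ_mk, Finset.sum_range_succ] at h0 h1
  rw [show ((s : ℤ[X])).coeff 1 = 0 by rw [← Polynomial.C_eq_intCast s, Polynomial.coeff_C]; norm_num] at h1
  exact ⟨⟨g.coeff 0, h0⟩, ⟨g.coeff 1, by linear_combination μ * h0 + 2 * h1⟩⟩
end

section
/- Every α ∈ R has a GLS τ-adic expansion: there exist ℓ ∈ ℕ and digits c_0, …, c_{ℓ−1} ∈ D such that α = Σ_{i=0}^{ℓ−1} c_i·τ^i in R and for every i with 0 ≤ i ≤ ℓ−4 at least one of c_i, c_{i+1}, c_{i+2}, c_{i+3} equals 0. -/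
open Polynomial

/-!
Write `α = a₀ + a₁τ + a₂τ² + a₃τ³`. Since `τ` has norm `4`, `τ ∣ α` iff `4 ∣ a₀`, so one step of the
expansion subtracts a digit `d ≡ a₀ (mod 4)`, `|d| ≤ 3`, and divides by `τ`; when `4 ∤ a₀` there are
two admissible digits, differing by `4`. All conjugates of `τ` have absolute value `√2`, so the
positive definite trace form `∑_σ |σ α|²` is halved by the division; hence a step with digit `0`
halves it and any step multiplies it by at most `4/5` up to a bounded error. Choosing digits by parity, a zero
digit is reached after at most three steps; for trace form at least `79` such a block decreases the
trace form, and the finitely many nonzero `α` below that bound are checked by computation.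
Induction on the trace form gives the expansion: every block has length at most four and ends
in a zero.
-/

namespace GLS

variable {μ : ℤ}

lemma P_natDegree (μ : ℤ) : (P μ).natDegree = 4 := by
  unfold P; compute_degree!

lemma P_monic (μ : ℤ) : (P μ).Monic := by
  unfold P; monicity!

lemma tau_pow_four (μ : ℤ) : tau μ ^ 4 = μ * tau μ ^ 3 + 2 * μ * tau μ - 4 := by
  have h : aeval (tau μ) (P μ) = 0 := AdjoinRoot.aeval_eq (P μ) ▸ AdjoinRoot.mk_self
  simp only [P, map_add, map_sub, map_mul, map_pow, aeval_X, map_ofNat, eq_intCast,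
    map_intCast] at h
  linear_combination h

def IsExpansion (μ : ℤ) (α : Rg μ) (ℓ : ℕ) (c : ℕ → ℤ) : Prop :=
  (∀ i < ℓ, -3 ≤ c i ∧ c i ≤ 3) ∧
    α = ∑ i ∈ Finset.range ℓ, (c i : Rg μ) * tau μ ^ i ∧
    ∀ i, i + 3 < ℓ → c i = 0 ∨ c (i + 1) = 0 ∨ c (i + 2) = 0 ∨ c (i + 3) = 0

lemma IsExpansion.cons {α : Rg μ} {ℓ : ℕ} {c : ℕ → ℤ} (h : IsExpansion μ α ℓ c) {d : ℤ}
    (hd : -3 ≤ d ∧ d ≤ 3) (hzero : d = 0 ∨ ∃ i < 3, c i = 0) :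
    IsExpansion μ (d + tau μ * α) (ℓ + 1) (fun | 0 => d | i + 1 => c i) := by
  obtain ⟨hdigits, rfl, hwindow⟩ := h
  refine ⟨?_, ?_, ?_⟩
  · rintro (_ | i) hi
    exacts [hd, hdigits i (by omega)]
  · rw [Finset.sum_range_succ', Finset.mul_sum, add_comm]
    simp only [pow_succ, pow_zero, mul_one]
    congr 1
    exact Finset.sum_congr rfl fun i _ => by ring
  · rintro (_ | i) hi
    · rcases hzero with h | ⟨j, hj, h⟩
      · exact Or.inl h
      · interval_cases j <;> simp [h]
    · exact hwindow i (by omega)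

def HasExpansionWithZeroBelow (μ : ℤ) (k : ℕ) (α : Rg μ) : Prop :=
  ∃ ℓ c, IsExpansion μ α ℓ c ∧ ∃ i < k, c i = 0

namespace HasExpansionWithZeroBelow

variable {k : ℕ} {α : Rg μ}

lemma exists_isExpansion (h : HasExpansionWithZeroBelow μ k α) : ∃ ℓ c, IsExpansion μ α ℓ c :=
  let ⟨ℓ, c, hc, _⟩ := h
  ⟨ℓ, c, hc⟩

lemma tau_mul {ℓ : ℕ} {c : ℕ → ℤ} (h : IsExpansion μ α ℓ c) :
    HasExpansionWithZeroBelow μ 1 (tau μ * α) := by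
  have h' := h.cons (d := 0) (by norm_num) (Or.inl rfl)
  rw [Int.cast_zero, zero_add] at h'
  exact ⟨ℓ + 1, _, h', 0, one_pos, rfl⟩

lemma digit_add_tau_mul (h : HasExpansionWithZeroBelow μ k α) (hk : k ≤ 3) {d : ℤ}
    (hd : -3 ≤ d ∧ d ≤ 3) : HasExpansionWithZeroBelow μ (k + 1) (d + tau μ * α) := by
  obtain ⟨ℓ, c, hc, i, hi, hzero⟩ := h
  exact ⟨ℓ + 1, _, hc.cons hd (Or.inr ⟨i, by omega, hzero⟩), i + 1, by omega, hzero⟩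

end HasExpansionWithZeroBelow

abbrev Coords := ℤ × ℤ × ℤ × ℤ

noncomputable def Coords.toRg (μ : ℤ) (a : Coords) : Rg μ :=
  a.1 + a.2.1 * tau μ + a.2.2.1 * tau μ ^ 2 + a.2.2.2 * tau μ ^ 3

def digit (v : Bool) (x : ℤ) : ℤ :=
  if x % 4 = 0 then 0 else if v then x % 4 else x % 4 - 4

lemma digit_mem_Icc (v : Bool) (x : ℤ) : -3 ≤ digit v x ∧ digit v x ≤ 3 := by
  unfold digit; split_ifs <;> omega

lemma four_dvd_sub_digit (v : Bool) (x : ℤ) : 4 ∣ x - digit v x := by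
  unfold digit; split_ifs <;> omega

lemma digit_of_emod_four {x : ℤ} (h : x % 4 = 0) (v : Bool) : digit v x = 0 := if_pos h

def divStep (μ : ℤ) (v : Bool) (a : Coords) : Coords :=
  let k := (a.1 - digit v a.1) / 4
  (a.2.1 + 2 * μ * k, a.2.2.1, a.2.2.2 + μ * k, -k)

lemma Coords.toRg_surjective (μ : ℤ) : Function.Surjective (Coords.toRg μ) := by
  intro α
  have : Nontrivial (Rg μ) := AdjoinRoot.nontrivial _ (by
    rw [degree_eq_natDegree (P_monic μ).ne_zero, P_natDegree]; decide)
  obtain ⟨f, hdeg, rfl⟩ := (AdjoinRoot.powerBasis' (P_monic μ)).exists_eq_aeval α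
  rw [AdjoinRoot.powerBasis'_dim, P_natDegree] at hdeg
  refine ⟨(f.coeff 0, f.coeff 1, f.coeff 2, f.coeff 3), ?_⟩
  rw [AdjoinRoot.powerBasis'_gen, aeval_eq_sum_range' hdeg]
  simp [Coords.toRg, tau, Finset.sum_range_succ, zsmul_eq_mul]

lemma toRg_eq_digit_add (μ : ℤ) (v : Bool) (a : Coords) :
    a.toRg μ = digit v a.1 + tau μ * (divStep μ v a).toRg μ := by
  obtain ⟨a0, a1, a2, a3⟩ := a
  obtain ⟨k, hk⟩ := four_dvd_sub_digit v a0
  have hk' : (a0 : Rg μ) - digit v a0 = 4 * k := by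
    simpa using congrArg (Int.cast : ℤ → Rg μ) hk
  simp only [Coords.toRg, divStep, hk, Int.mul_ediv_cancel_left _ four_ne_zero]
  push_cast
  linear_combination (k : Rg μ) * tau_pow_four μ + hk'

/-- `traceForm μ a = ∑_σ |σ (a.toRg μ)|²`, summed over the four complex embeddings `σ` of `Rg μ`. -/
def traceForm (μ : ℤ) (a : Coords) : ℤ :=
  4 * a.1 ^ 2 + 8 * a.2.1 ^ 2 + 16 * a.2.2.1 ^ 2 + 32 * a.2.2.2 ^ 2
    + 2 * μ * a.1 * a.2.1 + 2 * a.1 * a.2.2.1 + 14 * μ * a.1 * a.2.2.2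
    + 4 * μ * a.2.1 * a.2.2.1 + 4 * a.2.1 * a.2.2.2 + 8 * μ * a.2.2.1 * a.2.2.2

-- The right side is `traceForm` of `a - digit` expanded by polarization; `traceForm 1 = 4`.
lemma two_mul_traceForm_divStep (hμ : μ = 1 ∨ μ = -1) (v : Bool) (a : Coords) :
    2 * traceForm μ (divStep μ v a) = traceForm μ a
      - 2 * digit v a.1 * (4 * a.1 + μ * a.2.1 + a.2.2.1 + 7 * μ * a.2.2.2)
      + 4 * digit v a.1 ^ 2 := by
  obtain ⟨a0, a1, a2, a3⟩ := a
  obtain ⟨k, hk⟩ := four_dvd_sub_digit v a0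
  simp only [traceForm, divStep, hk, Int.mul_ediv_cancel_left _ four_ne_zero]
  generalize digit v a0 = d at hk ⊢
  obtain rfl : a0 = 4 * k + d := by omega
  rcases hμ with rfl | rfl <;> ring

lemma traceForm_divStep_of_emod_four (hμ : μ = 1 ∨ μ = -1) {a : Coords} (h : a.1 % 4 = 0)
    (v : Bool) : 2 * traceForm μ (divStep μ v a) = traceForm μ a := by
  simpa [digit_of_emod_four h] using two_mul_traceForm_divStep hμ v a

-- Cauchy–Schwarz for the trace form, paired with `1`.
lemma linear_sq_le_traceForm (hμ : μ = 1 ∨ μ = -1) (a : Coords) :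
    (4 * a.1 + μ * a.2.1 + a.2.2.1 + 7 * μ * a.2.2.2) ^ 2 ≤ 4 * traceForm μ a := by
  obtain ⟨a0, a1, a2, a3⟩ := a
  simp only [traceForm]
  rcases hμ with rfl | rfl <;>
    nlinarith [sq_nonneg (31 * a1 + 7 * a2 + a3), sq_nonneg (31 * a1 - 7 * a2 + a3),
      sq_nonneg (7 * a2 + a3), sq_nonneg (7 * a2 - a3), sq_nonneg a3]

lemma traceForm_divStep_le (hμ : μ = 1 ∨ μ = -1) (v : Bool) (a : Coords) :
    10 * traceForm μ (divStep μ v a) ≤ 8 * traceForm μ a + 480 := by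
  have hstep := two_mul_traceForm_divStep hμ v a
  have hsq := linear_sq_le_traceForm hμ a
  obtain ⟨hd₁, hd₂⟩ := digit_mem_Icc v a.1
  set d := digit v a.1
  set g := 4 * a.1 + μ * a.2.1 + a.2.2.1 + 7 * μ * a.2.2.2
  nlinarith [sq_nonneg (3 * g + 20 * d), sq_nonneg (3 * g - 20 * d)]

lemma coords_sq_le_traceForm (hμ : μ = 1 ∨ μ = -1) (a : Coords) :
    17 * a.1 ^ 2 ≤ 7 * traceForm μ a ∧ 68 * a.2.1 ^ 2 ≤ 9 * traceForm μ a ∧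
      136 * a.2.2.1 ^ 2 ≤ 9 * traceForm μ a ∧ 136 * a.2.2.2 ^ 2 ≤ 7 * traceForm μ a := by
  obtain ⟨a0, a1, a2, a3⟩ := a
  simp only [traceForm]
  rcases hμ with rfl | rfl
  · exact ⟨by nlinarith [sq_nonneg (11 * a0 + 7 * a1 + 7 * a2 + 49 * a3),
        sq_nonneg (27 * a1 + 5 * a2 - 9 * a3), sq_nonneg a2],
      by nlinarith [sq_nonneg (4 * a0 + a1 + a2 + 7 * a3),
        sq_nonneg (7 * a1 + 63 * a2 + 9 * a3), sq_nonneg a3],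
      by nlinarith [sq_nonneg (4 * a0 + a1 + a2 + 7 * a3),
        sq_nonneg (31 * a1 + 7 * a2 + a3), sq_nonneg (a2 + 9 * a3)],
      by nlinarith [sq_nonneg (4 * a0 + a1 + a2 + 7 * a3),
        sq_nonneg (31 * a1 + 7 * a2 + a3), sq_nonneg (7 * a2 + a3)]⟩
  · exact ⟨by nlinarith [sq_nonneg (11 * a0 - 7 * a1 + 7 * a2 - 49 * a3),
        sq_nonneg (27 * a1 - 5 * a2 - 9 * a3), sq_nonneg a2],
      by nlinarith [sq_nonneg (4 * a0 - a1 + a2 - 7 * a3),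
        sq_nonneg (7 * a1 - 63 * a2 + 9 * a3), sq_nonneg a3],
      by nlinarith [sq_nonneg (4 * a0 - a1 + a2 - 7 * a3),
        sq_nonneg (31 * a1 - 7 * a2 + a3), sq_nonneg (a2 - 9 * a3)],
      by nlinarith [sq_nonneg (4 * a0 - a1 + a2 - 7 * a3),
        sq_nonneg (31 * a1 - 7 * a2 + a3), sq_nonneg (7 * a2 - a3)]⟩

lemma traceForm_nonneg (hμ : μ = 1 ∨ μ = -1) (a : Coords) : 0 ≤ traceForm μ a := by
  nlinarith [(coords_sq_le_traceForm hμ a).1, sq_nonneg a.1]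

inductive StepsTo (μ : ℤ) : ℕ → Coords → Coords → Prop
  | refl (a : Coords) : StepsTo μ 0 a a
  | cons {n : ℕ} (v : Bool) {a b : Coords} : StepsTo μ n (divStep μ v a) b → StepsTo μ (n + 1) a b

namespace StepsTo

variable {n : ℕ} {a b : Coords}

-- `240` is the fixed point of `x ↦ (8 x + 480) / 10`, see `traceForm_divStep_le`.
lemma traceForm_sub_le (hμ : μ = 1 ∨ μ = -1) (h : StepsTo μ n a b) :
    10 ^ n * (traceForm μ b - 240) ≤ 8 ^ n * (traceForm μ a - 240) := by
  induction h with
  | refl => simp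
  | @cons n v a b _ ih =>
    have hstep := traceForm_divStep_le hμ v a
    rw [pow_succ, pow_succ]
    nlinarith [pow_pos (by norm_num : (0 : ℤ) < 8) n, pow_pos (by norm_num : (0 : ℤ) < 10) n]

lemma traceForm_lt_two_mul (hμ : μ = 1 ∨ μ = -1) (h : StepsTo μ n a b) (hn : n ≤ 3)
    (ha : 79 ≤ traceForm μ a) : traceForm μ b < 2 * traceForm μ a := by
  have hb := h.traceForm_sub_le hμ
  interval_cases n <;> omega

lemma hasExpansionWithZeroBelow {k : ℕ} (h : StepsTo μ n a b)
    (hb : HasExpansionWithZeroBelow μ k (b.toRg μ)) (hkn : k + n ≤ 4) :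
    HasExpansionWithZeroBelow μ (k + n) (a.toRg μ) := by
  induction h with
  | refl => exact hb
  | @cons n v a b _ ih =>
    rw [toRg_eq_digit_add μ v a, ← add_assoc]
    exact (ih hb (by omega)).digit_add_tau_mul (by omega) (digit_mem_Icc v a.1)

end StepsTo

-- The two admissible digits give quotients `k` and `k + 1`, which changes the new first
-- coordinate by `2 μ` and the new third one by `μ`.
lemma exists_divStep_fst_emod_four (hμ : μ = 1 ∨ μ = -1) {x : Coords} (hx : x.1 % 4 ≠ 0)
    (heven : x.2.1 % 2 = 0) : ∃ v, (divStep μ v x).1 % 4 = 0 := by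
  by_cases htrue : (divStep μ true x).1 % 4 = 0
  · exact ⟨true, htrue⟩
  · refine ⟨false, ?_⟩
    simp only [divStep, digit, if_neg hx, if_true, Bool.false_eq_true, if_false] at htrue ⊢
    rcases hμ with rfl | rfl <;> omega

lemma exists_divStep_thd_even (hμ : μ = 1 ∨ μ = -1) {x : Coords} (hx : x.1 % 4 ≠ 0) :
    ∃ v, (divStep μ v x).2.2.1 % 2 = 0 := by
  by_cases htrue : (divStep μ true x).2.2.1 % 2 = 0
  · exact ⟨true, htrue⟩
  · refine ⟨false, ?_⟩
    simp only [divStep, digit, if_neg hx, if_true, Bool.false_eq_true, if_false] at htrue ⊢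
    rcases hμ with rfl | rfl <;> omega

lemma exists_stepsTo_emod_four_of_snd_even (hμ : μ = 1 ∨ μ = -1) {a : Coords}
    (heven : a.2.1 % 2 = 0) : ∃ n ≤ 1, ∃ b, StepsTo μ n a b ∧ b.1 % 4 = 0 := by
  by_cases ha : a.1 % 4 = 0
  · exact ⟨0, zero_le_one, a, .refl a, ha⟩
  · obtain ⟨v, hv⟩ := exists_divStep_fst_emod_four hμ ha heven
    exact ⟨1, le_rfl, _, .cons v (.refl _), hv⟩

lemma exists_stepsTo_emod_four_of_thd_even (hμ : μ = 1 ∨ μ = -1) {a : Coords}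
    (heven : a.2.2.1 % 2 = 0) : ∃ n ≤ 2, ∃ b, StepsTo μ n a b ∧ b.1 % 4 = 0 := by
  by_cases ha : a.2.1 % 2 = 0
  · obtain ⟨n, hn, b, hab, hb⟩ := exists_stepsTo_emod_four_of_snd_even hμ ha
    exact ⟨n, by omega, b, hab, hb⟩
  · obtain ⟨n, hn, b, hab, hb⟩ :=
      exists_stepsTo_emod_four_of_snd_even (a := divStep μ true a) hμ heven
    exact ⟨n + 1, by omega, b, .cons true hab, hb⟩

lemma exists_stepsTo_emod_four (hμ : μ = 1 ∨ μ = -1) (a : Coords) :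
    ∃ n ≤ 3, ∃ b, StepsTo μ n a b ∧ b.1 % 4 = 0 := by
  by_cases ha : a.1 % 4 = 0
  · exact ⟨0, by omega, a, .refl a, ha⟩
  · obtain ⟨v, hv⟩ := exists_divStep_thd_even hμ ha
    obtain ⟨n, hn, b, hab, hb⟩ := exists_stepsTo_emod_four_of_thd_even hμ hv
    exact ⟨n + 1, by omega, b, .cons v hab, hb⟩

def HasDescent (μ : ℤ) (a : Coords) : Prop :=
  ∃ n ≤ 3, ∃ b, StepsTo μ n a b ∧ b.1 % 4 = 0 ∧
    traceForm μ (divStep μ true b) < traceForm μ a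

lemma hasDescent_of_le_traceForm (hμ : μ = 1 ∨ μ = -1) {a : Coords} (ha : 79 ≤ traceForm μ a) :
    HasDescent μ a := by
  obtain ⟨n, hn, b, hab, hb⟩ := exists_stepsTo_emod_four hμ a
  have hhalf := traceForm_divStep_of_emod_four hμ hb true
  have hlt := hab.traceForm_lt_two_mul hμ hn ha
  exact ⟨n, hn, b, hab, hb, by omega⟩

def descentEndCheck (μ M : ℤ) (b : Coords) : Bool :=
  b.1 % 4 == 0 && traceForm μ (divStep μ true b) < M

def descentCheck (μ M : ℤ) : ℕ → Coords → Bool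
  | 0, b => descentEndCheck μ M b
  | n + 1, b => descentEndCheck μ M b || descentCheck μ M n (divStep μ true b) ||
      descentCheck μ M n (divStep μ false b)

lemma exists_stepsTo_of_descentCheck {M : ℤ} {n : ℕ} {a : Coords}
    (h : descentCheck μ M n a = true) :
    ∃ m ≤ n, ∃ b, StepsTo μ m a b ∧ b.1 % 4 = 0 ∧ traceForm μ (divStep μ true b) < M := by
  induction n generalizing a with
  | zero =>
    simp only [descentCheck, descentEndCheck, Bool.and_eq_true, beq_iff_eq,
      decide_eq_true_eq] at h
    exact ⟨0, le_rfl, a, .refl a, h⟩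
  | succ n ih =>
    simp only [descentCheck, descentEndCheck, Bool.or_eq_true, Bool.and_eq_true, beq_iff_eq,
      decide_eq_true_eq] at h
    rcases h with (h | h) | h
    · exact ⟨0, by omega, a, .refl a, h⟩
    · obtain ⟨m, hm, b, hab, hb⟩ := ih h
      exact ⟨m + 1, by omega, b, .cons true hab, hb⟩
    · obtain ⟨m, hm, b, hab, hb⟩ := ih h
      exact ⟨m + 1, by omega, b, .cons false hab, hb⟩

-- By `coords_sq_le_traceForm`, this box contains every point of trace form at most `78`.
def boxCheck (μ : ℤ) : Bool :=
  (List.range 11).all fun i₀ => (List.range 7).all fun i₁ =>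
    (List.range 5).all fun i₂ => (List.range 5).all fun i₃ =>
      let a : Coords := ((i₀ : ℤ) - 5, (i₁ : ℤ) - 3, (i₂ : ℤ) - 2, (i₃ : ℤ) - 2)
      a == 0 || descentCheck μ (traceForm μ a) 3 a

lemma boxCheck_one : boxCheck 1 = true := by decide +kernel

lemma boxCheck_neg_one : boxCheck (-1) = true := by decide +kernel

lemma hasDescent_of_boxCheck (hbox : boxCheck μ = true) {a : Coords}
    (h₀ : -5 ≤ a.1 ∧ a.1 ≤ 5) (h₁ : -3 ≤ a.2.1 ∧ a.2.1 ≤ 3)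
    (h₂ : -2 ≤ a.2.2.1 ∧ a.2.2.1 ≤ 2) (h₃ : -2 ≤ a.2.2.2 ∧ a.2.2.2 ≤ 2) (ha : a ≠ 0) :
    HasDescent μ a := by
  obtain ⟨a₀, a₁, a₂, a₃⟩ := a
  dsimp only at h₀ h₁ h₂ h₃
  simp only [boxCheck, List.all_eq_true, List.mem_range, Bool.or_eq_true, beq_iff_eq] at hbox
  have hcheck := hbox (a₀ + 5).toNat (by omega) (a₁ + 3).toNat (by omega)
    (a₂ + 2).toNat (by omega) (a₃ + 2).toNat (by omega)
  simp only [show ((a₀ + 5).toNat : ℤ) - 5 = a₀ by omega,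
    show ((a₁ + 3).toNat : ℤ) - 3 = a₁ by omega, show ((a₂ + 2).toNat : ℤ) - 2 = a₂ by omega,
    show ((a₃ + 2).toNat : ℤ) - 2 = a₃ by omega] at hcheck
  exact exists_stepsTo_of_descentCheck (hcheck.resolve_left ha)

lemma hasDescent_of_traceForm_le (hμ : μ = 1 ∨ μ = -1) {a : Coords} (ha : a ≠ 0)
    (h78 : traceForm μ a ≤ 78) : HasDescent μ a := by
  obtain ⟨h₀, h₁, h₂, h₃⟩ := coords_sq_le_traceForm hμ a
  refine hasDescent_of_boxCheck ?_ ⟨by nlinarith, by nlinarith⟩ ⟨by nlinarith, by nlinarith⟩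
    ⟨by nlinarith, by nlinarith⟩ ⟨by nlinarith, by nlinarith⟩ ha
  rcases hμ with rfl | rfl
  exacts [boxCheck_one, boxCheck_neg_one]

lemma hasDescent (hμ : μ = 1 ∨ μ = -1) {a : Coords} (ha : a ≠ 0) : HasDescent μ a := by
  rcases le_or_gt (traceForm μ a) 78 with h | h
  exacts [hasDescent_of_traceForm_le hμ ha h, hasDescent_of_le_traceForm hμ h]

theorem exists_isExpansion_toRg (hμ : μ = 1 ∨ μ = -1) (a : Coords) :
    ∃ ℓ c, IsExpansion μ (a.toRg μ) ℓ c := by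
  induction hM : (traceForm μ a).toNat using Nat.strong_induction_on generalizing a with
  | _ M ih =>
  by_cases ha : a = 0
  · subst ha
    exact ⟨0, 0, by simp [IsExpansion, Coords.toRg]⟩
  obtain ⟨n, hn, b, hab, hb, hlt⟩ := hasDescent hμ ha
  have hnonneg := traceForm_nonneg hμ (divStep μ true b)
  obtain ⟨ℓ, c, hc⟩ := ih (traceForm μ (divStep μ true b)).toNat (by omega) _ rfl
  have hb' : HasExpansionWithZeroBelow μ 1 (b.toRg μ) := by
    rw [toRg_eq_digit_add μ true b, digit_of_emod_four hb, Int.cast_zero, zero_add]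
    exact .tau_mul hc
  exact (hab.hasExpansionWithZeroBelow hb' (by omega)).exists_isExpansion

end GLS

/-- Existence of GLS τ-adic expansions: every `α ∈ R` can be written as
`Σ c_i·τ^i` with digits `c_i ∈ {-3,…,3}` such that among any four consecutive
digits at least one is zero. -/
theorem stmt4 (μ : ℤ) (hμ : μ = 1 ∨ μ = -1) (α : Rg μ) :
    ∃ (ℓ : ℕ) (c : ℕ → ℤ),
      (∀ i < ℓ, -3 ≤ c i ∧ c i ≤ 3) ∧
      α = ∑ i ∈ Finset.range ℓ, (c i : Rg μ) * tau μ ^ i ∧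
      (∀ i, i + 3 < ℓ → c i = 0 ∨ c (i + 1) = 0 ∨ c (i + 2) = 0 ∨ c (i + 3) = 0) := by
  obtain ⟨a, rfl⟩ := GLS.Coords.toRg_surjective μ α
  exact GLS.exists_isExpansion_toRg hμ a
end

section
/- GLS τ-adic expansions are not unique: there exists α ∈ R admitting two GLS τ-adic expansions (c_0, …, c_{ℓ−1}) and (b_0, …, b_{m−1}) whose zero-padded digit sequences differ, i.e. for some index i one has (c_i if i < ℓ else 0) ≠ (b_i if i < m else 0). -/
open Polynomial

lemma tau_rel (μ : ℤ) :
    (tau μ) ^ 4 - (μ : Rg μ) * (tau μ) ^ 3 - ((2 * μ : ℤ) : Rg μ) * (tau μ) + 4 = 0 := by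
  have h : AdjoinRoot.mk (P μ) (P μ) = 0 := AdjoinRoot.mk_self
  have hr : tau μ = AdjoinRoot.mk (P μ) X := rfl
  have hc : ∀ k : ℤ, (k : Rg μ) = AdjoinRoot.mk (P μ) (C k) := by
    intro k; simp
  rw [hr, hc, hc]
  rw [show (4 : Rg μ) = AdjoinRoot.mk (P μ) (C 4) by rw [← hc]; norm_num]
  rw [← map_pow, ← map_pow, ← map_mul, ← map_mul, ← map_sub, ← map_sub, ← map_add]
  rw [show X ^ 4 - C μ * X ^ 3 - C (2 * μ) * X + C 4 = P μ by simp [P]]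
  exact h

/-- Non-uniqueness of GLS τ-adic expansions: some `α ∈ R` admits two GLS expansions
whose zero-padded digit sequences differ. -/
theorem stmt5 (μ : ℤ) (hμ : μ = 1 ∨ μ = -1) :
    ∃ (α : Rg μ) (ℓ m : ℕ) (c b : ℕ → ℤ),
      (∀ i < ℓ, -3 ≤ c i ∧ c i ≤ 3) ∧
      α = ∑ i ∈ Finset.range ℓ, (c i : Rg μ) * tau μ ^ i ∧
      (∀ i, i + 3 < ℓ → c i = 0 ∨ c (i + 1) = 0 ∨ c (i + 2) = 0 ∨ c (i + 3) = 0) ∧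
      (∀ i < m, -3 ≤ b i ∧ b i ≤ 3) ∧
      α = ∑ i ∈ Finset.range m, (b i : Rg μ) * tau μ ^ i ∧
      (∀ i, i + 3 < m → b i = 0 ∨ b (i + 1) = 0 ∨ b (i + 2) = 0 ∨ b (i + 3) = 0) ∧
      ∃ i, (if i < ℓ then c i else 0) ≠ (if i < m then b i else 0) := by
  have h := tau_rel μ
  refine ⟨tau μ ^ 4 + 1, 5, 4,
    (fun i => if i = 0 then 1 else if i = 4 then 1 else 0),
    (fun i => if i = 0 then -3 else if i = 1 then 2 * μ else if i = 3 then μ else 0),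
    ?_, ?_, ?_, ?_, ?_, ?_, ?_⟩
  · intro i hi
    interval_cases i <;> norm_num
  · rw [Finset.sum_range_succ, Finset.sum_range_succ, Finset.sum_range_succ,
      Finset.sum_range_succ, Finset.sum_range_succ, Finset.sum_range_zero]
    norm_num
    ring
  · intro i hi
    have h2 : i < 2 := by omega
    interval_cases i <;> simp
  · intro i hi
    rcases hμ with h1 | h1 <;> subst h1 <;> interval_cases i <;> norm_num
  · push_cast at h
    rw [Finset.sum_range_succ, Finset.sum_range_succ, Finset.sum_range_succ,
      Finset.sum_range_succ, Finset.sum_range_zero]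
    push_cast
    linear_combination h
  · intro i hi
    have h2 : i < 1 := by omega
    interval_cases i
    simp
  · exact ⟨0, by norm_num⟩
end

section
/- For every j₁, j₂ ∈ {0,1,2,3}, the τ-NAF with respect to D̃(j₁,j₂) is unique: if (c_0, …, c_{ℓ−1}) and (b_0, …, b_{m−1}) are both τ-NAFs of the same element α ∈ R with respect to D̃(j₁,j₂), then their zero-padded digit sequences agree, i.e. for every index i, (c_i if i < ℓ else 0) = (b_i if i < m else 0). -/
/-!
Every digit has the form `x + y τ` with `x, y ∈ ℤ`. Since `P(0) = 4`, evaluation at `0` shows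
that `τ` is a non-zero-divisor and that `τ ∣ x` forces `4 ∣ x`; together with
`4 = τ (2μ + μτ² - τ³)` this gives that `τ² ∣ x + y τ` forces `x = 4u`, `y = 4v - 2μu`.
Hence nonzero digits are not divisible by `τ` and are pairwise incongruent modulo `τ²`.
In a NAF a nonzero digit is followed by `0`, so the lowest digit is determined by `α` modulo
`τ²`; cancelling `τ` and inducting on the length gives uniqueness.
-/

open Polynomial

noncomputable def Dtil (μ : ℤ) (j₁ j₂ : ℕ) : Set (Rg μ) :=
  {0, 1, -1, 2, -2, 1 + tau μ, 1 - tau μ, -1 + tau μ, -1 - tau μ,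
   (-1 : Rg μ) ^ (j₁ / 2) * (2 + tau μ), (-1 : Rg μ) ^ j₁ * (2 - tau μ),
   1 + 2 * (μ : Rg μ) * (-1 : Rg μ) ^ (j₂ / 2) * tau μ,
   -1 + 2 * (μ : Rg μ) * (-1 : Rg μ) ^ j₂ * tau μ}

section NAF

variable {R : Type*} [CommRing R] {τ : R} {D : Set R}

structure IsNAF (D : Set R) (d : ℕ → R) : Prop where
  mem : ∀ i, d i ∈ D
  eq_zero_or_succ_eq_zero : ∀ i, d i = 0 ∨ d (i + 1) = 0

lemma IsNAF.shift {d : ℕ → R} (hd : IsNAF D d) : IsNAF D (fun i ↦ d (i + 1)) :=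
  ⟨fun _ ↦ hd.mem _, fun _ ↦ hd.eq_zero_or_succ_eq_zero _⟩

lemma IsNAF.pad (h0 : (0 : R) ∈ D) {ℓ : ℕ} {c : ℕ → R} (hc : ∀ i < ℓ, c i ∈ D)
    (hnaf : ∀ i, i + 1 < ℓ → c i = 0 ∨ c (i + 1) = 0) :
    IsNAF D (fun i ↦ if i < ℓ then c i else 0) where
  mem i := by
    split_ifs with hi
    exacts [hc i hi, h0]
  eq_zero_or_succ_eq_zero i := by
    by_cases hi : i + 1 < ℓ
    · simpa [hi, show i < ℓ by omega] using hnaf i hi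
    · simp [hi]

lemma sum_range_pad_mul_pow {ℓ N : ℕ} (h : ℓ ≤ N) (c : ℕ → R) (τ : R) :
    ∑ i ∈ Finset.range N, (if i < ℓ then c i else 0) * τ ^ i =
      ∑ i ∈ Finset.range ℓ, c i * τ ^ i := by
  rw [← Finset.sum_range_add_sum_Ico _ h]
  have hlow : ∀ i ∈ Finset.range ℓ, (if i < ℓ then c i else 0) * τ ^ i = c i * τ ^ i :=
    fun i hi ↦ by rw [if_pos (Finset.mem_range.mp hi)]
  have hhigh : ∀ i ∈ Finset.Ico ℓ N, (if i < ℓ then c i else 0) * τ ^ i = 0 :=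
    fun i hi ↦ by rw [if_neg (Finset.mem_Ico.mp hi).1.not_gt, zero_mul]
  rw [Finset.sum_congr rfl hlow, Finset.sum_eq_zero hhigh, add_zero]

lemma sum_range_succ_mul_pow (d : ℕ → R) (τ : R) (N : ℕ) :
    ∑ i ∈ Finset.range (N + 1), d i * τ ^ i =
      d 0 + τ * ∑ i ∈ Finset.range N, d (i + 1) * τ ^ i := by
  rw [Finset.sum_range_succ', Finset.mul_sum, add_comm]
  simp only [pow_zero, mul_one, pow_succ]
  congr 1
  exact Finset.sum_congr rfl fun i _ ↦ by ring

lemma dvd_sum_mul_pow_of_head_eq_zero {d : ℕ → R} (h : d 0 = 0) (N : ℕ) :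
    τ ∣ ∑ i ∈ Finset.range N, d i * τ ^ i := by
  cases N with
  | zero => simp
  | succ N => simp [sum_range_succ_mul_pow, h]

lemma sq_dvd_sum_mul_pow_sub_head {d : ℕ → R} (h : d 1 = 0) (N : ℕ) :
    τ ^ 2 ∣ ∑ i ∈ Finset.range (N + 1), d i * τ ^ i - d 0 := by
  rw [sum_range_succ_mul_pow, add_sub_cancel_left, sq]
  exact mul_dvd_mul_left τ (dvd_sum_mul_pow_of_head_eq_zero h N)

lemma IsNAF.head_eq_of_sum_eq (hD₁ : ∀ d ∈ D, d ≠ 0 → ¬τ ∣ d)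
    (hD₂ : ∀ d ∈ D, ∀ e ∈ D, d ≠ 0 → e ≠ 0 → τ ^ 2 ∣ d - e → d = e)
    {d e : ℕ → R} (hd : IsNAF D d) (he : IsNAF D e) {N : ℕ}
    (h : ∑ i ∈ Finset.range (N + 1), d i * τ ^ i = ∑ i ∈ Finset.range (N + 1), e i * τ ^ i) :
    d 0 = e 0 := by
  have hzero {d : ℕ → R} (hd0 : d 0 = 0) : τ ∣ ∑ i ∈ Finset.range (N + 1), d i * τ ^ i :=
    dvd_sum_mul_pow_of_head_eq_zero hd0 _
  have hnonzero {d : ℕ → R} (hd : IsNAF D d) (hd0 : d 0 ≠ 0) :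
      τ ^ 2 ∣ ∑ i ∈ Finset.range (N + 1), d i * τ ^ i - d 0 :=
    sq_dvd_sum_mul_pow_sub_head ((hd.eq_zero_or_succ_eq_zero 0).resolve_left hd0) N
  have hτ : τ ∣ τ ^ 2 := dvd_pow_self τ two_ne_zero
  by_cases hd0 : d 0 = 0 <;> by_cases he0 : e 0 = 0
  · rw [hd0, he0]
  · refine (hD₁ _ (he.mem 0) he0 ?_).elim
    simpa [h] using dvd_sub (hzero hd0) (hτ.trans (hnonzero he he0))
  · refine (hD₁ _ (hd.mem 0) hd0 ?_).elim
    simpa [h] using dvd_sub (hzero he0) (hτ.trans (hnonzero hd hd0))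
  · refine hD₂ _ (hd.mem 0) _ (he.mem 0) hd0 he0 ?_
    simpa [h] using dvd_sub (hnonzero he he0) (hnonzero hd hd0)

theorem IsNAF.eq_of_sum_eq (hτ : IsLeftRegular τ) (hD₁ : ∀ d ∈ D, d ≠ 0 → ¬τ ∣ d)
    (hD₂ : ∀ d ∈ D, ∀ e ∈ D, d ≠ 0 → e ≠ 0 → τ ^ 2 ∣ d - e → d = e)
    {d e : ℕ → R} (hd : IsNAF D d) (he : IsNAF D e) {N : ℕ}
    (h : ∑ i ∈ Finset.range N, d i * τ ^ i = ∑ i ∈ Finset.range N, e i * τ ^ i) :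
    ∀ i < N, d i = e i := by
  induction N generalizing d e with
  | zero => simp
  | succ N ih =>
    have h0 : d 0 = e 0 := hd.head_eq_of_sum_eq hD₁ hD₂ he h
    rw [sum_range_succ_mul_pow, sum_range_succ_mul_pow, h0, add_right_inj] at h
    rintro (_ | i) hi
    exacts [h0, ih hd.shift he.shift (hτ h) i (by omega)]

end NAF

section Tau

variable (μ : ℤ)

lemma eval_zero_P : (P μ).eval 0 = 4 := by simp [P]

lemma four_eq_tau_mul : (4 : Rg μ) = tau μ * (2 * μ + μ * tau μ ^ 2 - tau μ ^ 3) := by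
  have h : AdjoinRoot.mk (P μ) (X ^ 4 - C μ * X ^ 3 - C (2 * μ) * X + 4) = 0 :=
    AdjoinRoot.mk_self
  simp only [map_add, map_sub, map_mul, map_pow, AdjoinRoot.mk_X, map_ofNat,
    map_intCast, eq_intCast] at h
  rw [tau]
  linear_combination h

lemma isLeftRegular_tau : IsLeftRegular (tau μ) := by
  rw [isLeftRegular_iff_right_eq_zero_of_mul]
  intro z hz
  obtain ⟨f, rfl⟩ := AdjoinRoot.mk_surjective z
  rw [tau, ← AdjoinRoot.mk_X, ← map_mul, AdjoinRoot.mk_eq_zero] at hz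
  obtain ⟨g, hg⟩ := hz
  have hg0 : g.coeff 0 = 0 := by
    have := congrArg (eval 0) hg
    simpa [eval_zero_P, coeff_zero_eq_eval_zero] using this
  obtain ⟨h, rfl⟩ := X_dvd_iff.mpr hg0
  rw [AdjoinRoot.mk_eq_zero]
  exact ⟨h, mul_left_cancel₀ X_ne_zero (by rw [hg]; ring)⟩

lemma four_dvd_of_tau_dvd_intCast {x : ℤ} (h : tau μ ∣ (x : Rg μ)) : 4 ∣ x := by
  obtain ⟨β, hβ⟩ := h
  obtain ⟨f, rfl⟩ := AdjoinRoot.mk_surjective β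
  rw [tau, ← AdjoinRoot.mk_X, ← map_mul, ← map_intCast (AdjoinRoot.mk (P μ)),
    AdjoinRoot.mk_eq_mk] at hβ
  obtain ⟨g, hg⟩ := hβ
  exact ⟨g.eval 0, by simpa [eval_zero_P] using congrArg (eval 0) hg⟩

lemma four_dvd_of_tau_dvd {x y : ℤ} (h : tau μ ∣ x + y * tau μ) : 4 ∣ x :=
  four_dvd_of_tau_dvd_intCast μ (by simpa using dvd_sub h (dvd_mul_left (tau μ) y))

lemma exists_of_tau_sq_dvd {x y : ℤ} (h : tau μ ^ 2 ∣ x + y * tau μ) :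
    ∃ u v : ℤ, x = 4 * u ∧ y = 4 * v - 2 * μ * u := by
  obtain ⟨u, rfl⟩ := four_dvd_of_tau_dvd μ ((dvd_pow_self _ two_ne_zero).trans h)
  have hsplit : ((4 * u : ℤ) : Rg μ) + y * tau μ =
      tau μ * (((2 * μ * u + y : ℤ) : Rg μ) + tau μ * (u * (μ * tau μ - tau μ ^ 2))) := by
    push_cast
    linear_combination (u : Rg μ) * four_eq_tau_mul μ
  obtain ⟨β, hβ⟩ := h
  rw [hsplit, pow_two, mul_assoc (tau μ)] at hβ
  have hdiv : tau μ ∣ ((2 * μ * u + y : ℤ) : Rg μ) :=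
    (dvd_add_left (dvd_mul_right _ _)).mp ⟨β, isLeftRegular_tau μ hβ⟩
  obtain ⟨v, hv⟩ := four_dvd_of_tau_dvd_intCast μ hdiv
  exact ⟨u, v, rfl, by omega⟩

end Tau

def digitCoords (μ s₁ s₂ t₁ t₂ : ℤ) : Set (ℤ × ℤ) :=
  {(0, 0), (1, 0), (-1, 0), (2, 0), (-2, 0), (1, 1), (1, -1), (-1, 1), (-1, -1),
   (2 * s₁, s₁), (2 * s₂, -s₂), (1, 2 * μ * t₁), (-1, 2 * μ * t₂)}

section digitCoords

variable {μ s₁ s₂ t₁ t₂ : ℤ} {p q : ℤ × ℤ}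

lemma not_four_dvd_of_mem_digitCoords (hs₁ : s₁ = 1 ∨ s₁ = -1) (hs₂ : s₂ = 1 ∨ s₂ = -1)
    (hp : p ∈ digitCoords μ s₁ s₂ t₁ t₂) (hp0 : p ≠ 0) : ¬4 ∣ p.1 := by
  obtain ⟨x, y⟩ := p
  simp only [digitCoords, Set.mem_insert_iff, Set.mem_singleton_iff, Prod.mk.injEq,
    Prod.mk_eq_zero, ne_eq] at hp hp0 ⊢
  omega

lemma eq_of_mem_digitCoords (hμ : μ = 1 ∨ μ = -1) (hs₂ : s₂ = 1 ∨ s₂ = -1)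
    (ht₁ : t₁ = 1 ∨ t₁ = -1) (ht₂ : t₂ = 1 ∨ t₂ = -1)
    (hp : p ∈ digitCoords μ s₁ s₂ t₁ t₂) (hq : q ∈ digitCoords μ s₁ s₂ t₁ t₂)
    (hp0 : p ≠ 0) (hq0 : q ≠ 0) {u v : ℤ}
    (hx : p.1 - q.1 = 4 * u) (hy : p.2 - q.2 = 4 * v - 2 * μ * u) : p = q := by
  obtain ⟨x, y⟩ := p
  obtain ⟨x', y'⟩ := q
  simp only [digitCoords, Set.mem_insert_iff, Set.mem_singleton_iff, Prod.mk.injEq,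
    Prod.mk_eq_zero, ne_eq] at hp hq hp0 hq0 hx hy ⊢
  rcases hμ with rfl | rfl <;> omega

end digitCoords

lemma Dtil_eq_image (μ : ℤ) (j₁ j₂ : ℕ) :
    Dtil μ j₁ j₂ = (fun p : ℤ × ℤ ↦ (p.1 : Rg μ) + p.2 * tau μ) ''
      digitCoords μ ((-1) ^ (j₁ / 2)) ((-1) ^ j₁) ((-1) ^ (j₂ / 2)) ((-1) ^ j₂) := by
  simp only [Dtil, digitCoords, Set.image_insert_eq, Set.image_singleton]
  iterate 12 refine congrArg₂ insert (by push_cast; ring) ?_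
  exact congrArg singleton (by push_cast; ring)

section Dtil

variable {μ : ℤ} {j₁ j₂ : ℕ} {d e : Rg μ}

lemma not_tau_dvd_of_mem_Dtil (hd : d ∈ Dtil μ j₁ j₂) (hd0 : d ≠ 0) : ¬tau μ ∣ d := by
  rw [Dtil_eq_image] at hd
  obtain ⟨p, hp, rfl⟩ := hd
  have hp0 : p ≠ 0 := by
    rintro rfl
    simp at hd0
  exact fun h ↦ not_four_dvd_of_mem_digitCoords (neg_one_pow_eq_or ℤ _) (neg_one_pow_eq_or ℤ _)
    hp hp0 (four_dvd_of_tau_dvd μ h)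

lemma eq_of_mem_Dtil (hμ : μ = 1 ∨ μ = -1) (hd : d ∈ Dtil μ j₁ j₂) (he : e ∈ Dtil μ j₁ j₂)
    (hd0 : d ≠ 0) (he0 : e ≠ 0) (h : tau μ ^ 2 ∣ d - e) : d = e := by
  rw [Dtil_eq_image] at hd he
  obtain ⟨p, hp, rfl⟩ := hd
  obtain ⟨q, hq, rfl⟩ := he
  have hp0 : p ≠ 0 := by
    rintro rfl
    simp at hd0
  have hq0 : q ≠ 0 := by
    rintro rfl
    simp at he0
  have hpq : tau μ ^ 2 ∣ ((p.1 - q.1 : ℤ) : Rg μ) + ((p.2 - q.2 : ℤ) : Rg μ) * tau μ := by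
    convert h using 1
    push_cast
    ring
  obtain ⟨u, v, hx, hy⟩ := exists_of_tau_sq_dvd μ hpq
  rw [eq_of_mem_digitCoords hμ (neg_one_pow_eq_or ℤ _) (neg_one_pow_eq_or ℤ _)
    (neg_one_pow_eq_or ℤ _) hp hq hp0 hq0 hx hy]

end Dtil

theorem stmt8_general (μ : ℤ) (hμ : μ = 1 ∨ μ = -1) (j₁ j₂ : ℕ)
    (α : Rg μ) (ℓ m : ℕ) (c b : ℕ → Rg μ)
    (hc : ∀ i < ℓ, c i ∈ Dtil μ j₁ j₂)
    (hcsum : α = ∑ i ∈ Finset.range ℓ, c i * tau μ ^ i)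
    (hcnaf : ∀ i, i + 1 < ℓ → c i = 0 ∨ c (i + 1) = 0)
    (hb : ∀ i < m, b i ∈ Dtil μ j₁ j₂)
    (hbsum : α = ∑ i ∈ Finset.range m, b i * tau μ ^ i)
    (hbnaf : ∀ i, i + 1 < m → b i = 0 ∨ b (i + 1) = 0) :
    ∀ i, (if i < ℓ then c i else 0) = (if i < m then b i else 0) := by
  intro i
  have h0 : (0 : Rg μ) ∈ Dtil μ j₁ j₂ := by simp [Dtil]
  refine (IsNAF.pad h0 hc hcnaf).eq_of_sum_eq (isLeftRegular_tau μ)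
    (fun _ hd ↦ not_tau_dvd_of_mem_Dtil hd) (fun _ hd _ he ↦ eq_of_mem_Dtil hμ hd he)
    (IsNAF.pad h0 hb hbnaf) (N := ℓ + m + i + 1) ?_ i (by omega)
  rw [sum_range_pad_mul_pow (by omega), sum_range_pad_mul_pow (by omega), ← hcsum, ← hbsum]

/-- Uniqueness of the τ-NAF: two τ-NAFs of the same `α ∈ R` with respect to the
digit set `D̃(j₁,j₂)` have identical zero-padded digit sequences. -/
theorem stmt8 (μ : ℤ) (hμ : μ = 1 ∨ μ = -1) (j₁ j₂ : ℕ) (hj₁ : j₁ < 4) (hj₂ : j₂ < 4)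
    (α : Rg μ) (ℓ m : ℕ) (c b : ℕ → Rg μ)
    (hc : ∀ i < ℓ, c i ∈ Dtil μ j₁ j₂)
    (hcsum : α = ∑ i ∈ Finset.range ℓ, c i * tau μ ^ i)
    (hcnaf : ∀ i, i + 1 < ℓ → c i = 0 ∨ c (i + 1) = 0)
    (hb : ∀ i < m, b i ∈ Dtil μ j₁ j₂)
    (hbsum : α = ∑ i ∈ Finset.range m, b i * tau μ ^ i)
    (hbnaf : ∀ i, i + 1 < m → b i = 0 ∨ b (i + 1) = 0) :
    ∀ i, (if i < ℓ then c i else 0) = (if i < m then b i else 0) :=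
  stmt8_general μ hμ j₁ j₂ α ℓ m c b hc hcsum hcnaf hb hbsum hbnaf
end

section
/- For every j₁, j₂ ∈ {0,1,2,3}, the τ-NAF with respect to D̃(j₁,j₂) does not have minimal Hamming weight: there exist α ∈ R, a τ-NAF (c_0, …, c_{ℓ−1}) of α with respect to D̃(j₁,j₂), and digits b_0, …, b_{m−1} ∈ D̃(j₁,j₂) with α = Σ_{i=0}^{m−1} b_i·τ^i in R (no condition on consecutive digits), such that the Hamming weight of (b_i) is strictly smaller than the Hamming weight of (c_i). -/
open Polynomial

open Classical

-- root equation
lemma tau_pow (μ : ℤ) : tau μ ^ 4 - (μ : Rg μ) * tau μ ^ 3 - 2 * μ * tau μ + 4 = 0 := by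
  have h : AdjoinRoot.mk (P μ) (X ^ 4 - C μ * X ^ 3 - C (2 * μ) * X + 4) = 0 :=
    AdjoinRoot.mk_self
  simp only [map_add, map_sub, map_mul, map_pow, map_ofNat, AdjoinRoot.mk_X,
    AdjoinRoot.mk_C] at h
  rw [eq_intCast (AdjoinRoot.of (P μ)) μ] at h
  rw [show AdjoinRoot.root (P μ) = tau μ from rfl] at h
  push_cast at h ⊢
  linear_combination h

-- hom to ZMod 4 sending tau to 0
lemma root_zero (μ : ℤ) : (P μ).eval₂ (Int.castRingHom (ZMod 4)) 0 = 0 := by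
  simp [P]; decide

noncomputable def φ (μ : ℤ) : Rg μ →+* ZMod 4 :=
  AdjoinRoot.lift (Int.castRingHom (ZMod 4)) 0 (root_zero μ)

lemma φ_tau (μ : ℤ) : φ μ (tau μ) = 0 := AdjoinRoot.lift_root _

lemma neAux (μ : ℤ) (x : Rg μ) (v : ZMod 4) (hv : φ μ x = v) (h0 : v ≠ 0) : x ≠ 0 :=
  fun h => h0 (by rw [← hv, h, map_zero])

lemma ne₁ (μ : ℤ) : 1 + tau μ ≠ 0 :=
  neAux μ _ 1 (by rw [map_add, map_one, φ_tau, add_zero]) (by decide)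

lemma ne₃ (μ : ℤ) : -1 + tau μ ≠ 0 :=
  neAux μ _ 3 (by rw [map_add, map_neg, map_one, φ_tau, add_zero]; decide) (by decide)

lemma ne₄ (μ : ℤ) : 1 - tau μ ≠ 0 :=
  neAux μ _ 1 (by rw [map_sub, map_one, φ_tau, sub_zero]) (by decide)

lemma ne₅ (μ : ℤ) : (-2 : Rg μ) ≠ 0 :=
  neAux μ _ 2 (by rw [map_neg, map_ofNat]; decide) (by decide)

lemma ne₆ (μ : ℤ) : (2 : Rg μ) ≠ 0 :=
  neAux μ _ 2 (by rw [map_ofNat]) (by decide)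

/-- Non-minimality of the τ-NAF: for each digit set `D̃(j₁,j₂)` there are `α ∈ R`,
a τ-NAF `(c_i)` of `α`, and another expansion `(b_i)` over `D̃(j₁,j₂)` (with no
condition on consecutive digits) of strictly smaller Hamming weight. -/
theorem stmt9 (μ : ℤ) (hμ : μ = 1 ∨ μ = -1) (j₁ j₂ : ℕ) (hj₁ : j₁ < 4) (hj₂ : j₂ < 4) :
    ∃ (α : Rg μ) (ℓ : ℕ) (c : ℕ → Rg μ) (m : ℕ) (b : ℕ → Rg μ),
      (∀ i < ℓ, c i ∈ Dtil μ j₁ j₂) ∧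
      α = ∑ i ∈ Finset.range ℓ, c i * tau μ ^ i ∧
      (∀ i, i + 1 < ℓ → c i = 0 ∨ c (i + 1) = 0) ∧
      (∀ i < m, b i ∈ Dtil μ j₁ j₂) ∧
      α = ∑ i ∈ Finset.range m, b i * tau μ ^ i ∧
      ((Finset.range m).filter (fun i => b i ≠ 0)).card
        < ((Finset.range ℓ).filter (fun i => c i ≠ 0)).card := by
  have h := tau_pow μ
  rcases hμ with rfl | rfl
  · refine ⟨1 - 3 * tau 1, 5,
      (fun i => if i = 0 then 1 + tau 1 else if i = 2 then -2
        else if i = 4 then -1 + tau 1 else 0), 2,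
      (fun i => if i = 0 then 1 - tau 1 else if i = 1 then -2 else 0),
      ?_, ?_, ?_, ?_, ?_, ?_⟩
    · intro i hi
      interval_cases i <;>
        simp only [Dtil, Set.mem_insert_iff, Set.mem_singleton_iff] <;> norm_num <;> tauto
    · simp [Finset.sum_range_succ]
      push_cast at h
      linear_combination (-(tau 1)) * h
    · intro i hi; have hi4 : i < 4 := by omega
      interval_cases i <;> simp
    · intro i hi
      interval_cases i <;>
        simp only [Dtil, Set.mem_insert_iff, Set.mem_singleton_iff] <;> norm_num <;> tauto
    · simp [Finset.sum_range_succ]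
      ring
    · have hc : ((Finset.range 5).filter (fun i =>
          (if i = 0 then 1 + tau 1 else if i = 2 then (-2 : Rg 1)
            else if i = 4 then -1 + tau 1 else 0) ≠ 0)) = {0, 2, 4} := by
        ext i
        simp only [Finset.mem_filter, Finset.mem_range, Finset.mem_insert,
          Finset.mem_singleton]
        constructor
        · rintro ⟨hi, hne⟩; interval_cases i <;> simp_all
        · rintro (rfl | rfl | rfl) <;>
            simp [ne₁, ne₃, ne₅, ne₆]
      rw [hc]
      calc ((Finset.range 2).filter _).card ≤ (Finset.range 2).card :=
            Finset.card_filter_le _ _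
        _ < 3 := by simp
        _ = ({0, 2, 4} : Finset ℕ).card := by decide
  · refine ⟨1 - 3 * tau (-1), 5,
      (fun i => if i = 0 then 1 + tau (-1) else if i = 2 then 2
        else if i = 4 then 1 + tau (-1) else 0), 2,
      (fun i => if i = 0 then 1 - tau (-1) else if i = 1 then -2 else 0),
      ?_, ?_, ?_, ?_, ?_, ?_⟩
    · intro i hi
      interval_cases i <;>
        simp only [Dtil, Set.mem_insert_iff, Set.mem_singleton_iff] <;> norm_num <;> tauto
    · simp [Finset.sum_range_succ]
      push_cast at h
      linear_combination (-(tau (-1))) * h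
    · intro i hi; have hi4 : i < 4 := by omega
      interval_cases i <;> simp
    · intro i hi
      interval_cases i <;>
        simp only [Dtil, Set.mem_insert_iff, Set.mem_singleton_iff] <;> norm_num <;> tauto
    · simp [Finset.sum_range_succ]
      ring
    · have hc : ((Finset.range 5).filter (fun i =>
          (if i = 0 then 1 + tau (-1) else if i = 2 then (2 : Rg (-1))
            else if i = 4 then 1 + tau (-1) else 0) ≠ 0)) = {0, 2, 4} := by
        ext i
        simp only [Finset.mem_filter, Finset.mem_range, Finset.mem_insert,
          Finset.mem_singleton]
        constructor
        · rintro ⟨hi, hne⟩; interval_cases i <;> simp_all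
        · rintro (rfl | rfl | rfl) <;>
            simp [ne₁, ne₅, ne₆]
      rw [hc]
      calc ((Finset.range 2).filter _).card ≤ (Finset.range 2).card :=
            Finset.card_filter_le _ _
        _ < 3 := by simp
        _ = ({0, 2, 4} : Finset ℕ).card := by decide
end

section
/- For every j₁, j₂ ∈ {0,1,2,3} and all b, c ∈ D̃(j₁,j₂): if τ² divides b − c in R, then b = c. In other words, the digits in each set D̃(j₁,j₂) are pairwise incongruent modulo τ². -/
open Polynomial

/- Auxiliary construction: the finite ring `S ≅ ℤ[X]/(P μ, X²)`, realized concretely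
on `Fin 16`, encoding `a + b·e` (with `8 = 0`, `2e = 0`, `e² = 4`) as `a % 8 + 8·(b % 2)`. -/

def S : Type := Fin 16

instance : DecidableEq S := inferInstanceAs (DecidableEq (Fin 16))
instance : Fintype S := inferInstanceAs (Fintype (Fin 16))

def Smk (a b : ℕ) : S := ⟨(a % 8 + 8 * (b % 2)) % 16, Nat.mod_lt _ (by norm_num)⟩
def pa (x : S) : ℕ := (x : Fin 16).val % 8
def pb (x : S) : ℕ := (x : Fin 16).val / 8

instance : Zero S := ⟨(0 : Fin 16)⟩
instance : One S := ⟨(1 : Fin 16)⟩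
instance : Add S := ⟨fun x y => Smk (pa x + pa y) (pb x + pb y)⟩
instance : Neg S := ⟨fun x => Smk (8 - pa x) (2 - pb x)⟩
instance : Mul S := ⟨fun x y => Smk (pa x * pa y + 4 * (pb x * pb y)) (pa x * pb y + pa y * pb x)⟩

set_option maxHeartbeats 4000000 in
instance : CommRing S where
  nsmul := nsmulRec
  zsmul := zsmulRec
  add_assoc := by decide
  zero_add := by decide
  add_zero := by decide
  add_comm := by decide
  neg_add_cancel := by decide
  mul_assoc := by decide
  one_mul := by decide
  mul_one := by decide
  left_distrib := by decide
  right_distrib := by decide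
  zero_mul := by decide
  mul_zero := by decide
  mul_comm := by decide

/-- The image of `τ` in `S` when `μ = 1`: the element `2 + e`. -/
def t1 : S := ⟨10, by norm_num⟩
/-- The image of `τ` in `S` when `μ = -1`: the element `6 + e`. -/
def t2 : S := ⟨14, by norm_num⟩

lemma hroot1 : (P 1).eval₂ (Int.castRingHom S) t1 = 0 := by
  simp only [P, eval₂_add, eval₂_sub, eval₂_mul, eval₂_pow, eval₂_X, eval₂_C, eval₂_ofNat]
  decide

lemma hroot2 : (P (-1)).eval₂ (Int.castRingHom S) t2 = 0 := by
  simp only [P, eval₂_add, eval₂_sub, eval₂_mul, eval₂_pow, eval₂_X, eval₂_C, eval₂_ofNat]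
  decide

noncomputable def phi1 : Rg 1 →+* S := AdjoinRoot.lift (Int.castRingHom S) t1 hroot1
noncomputable def phi2 : Rg (-1) →+* S := AdjoinRoot.lift (Int.castRingHom S) t2 hroot2

lemma phi1_tau : phi1 (tau 1) = t1 := AdjoinRoot.lift_root hroot1
lemma phi2_tau : phi2 (tau (-1)) = t2 := AdjoinRoot.lift_root hroot2

lemma W10a (k : ℕ) : phi1 ((-1 : Rg 1) ^ k * (2 + tau 1)) = 2 + t1 := by
  rcases neg_one_pow_eq_or (Rg 1) k with h | h <;> rw [h] <;>
    simp only [one_mul, neg_one_mul, map_neg, map_add, map_ofNat, phi1_tau] <;> decide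

lemma W11a (k : ℕ) : phi1 ((-1 : Rg 1) ^ k * (2 - tau 1)) = 2 - t1 := by
  rcases neg_one_pow_eq_or (Rg 1) k with h | h <;> rw [h] <;>
    simp only [one_mul, neg_one_mul, map_neg, map_sub, map_ofNat, phi1_tau] <;> decide

lemma W12a (k : ℕ) :
    phi1 (1 + 2 * ((1 : ℤ) : Rg 1) * (-1 : Rg 1) ^ k * tau 1) = 1 + 2 * t1 := by
  rcases neg_one_pow_eq_or (Rg 1) k with h | h <;> rw [h] <;>
    simp only [map_add, map_sub, map_mul, map_neg, map_one, map_ofNat, map_intCast,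
      phi1_tau] <;> decide

lemma W13a (k : ℕ) :
    phi1 (-1 + 2 * ((1 : ℤ) : Rg 1) * (-1 : Rg 1) ^ k * tau 1) = -1 + 2 * t1 := by
  rcases neg_one_pow_eq_or (Rg 1) k with h | h <;> rw [h] <;>
    simp only [map_add, map_sub, map_mul, map_neg, map_one, map_ofNat, map_intCast,
      phi1_tau] <;> decide

lemma W10b (k : ℕ) : phi2 ((-1 : Rg (-1)) ^ k * (2 + tau (-1))) = 2 + t2 := by
  rcases neg_one_pow_eq_or (Rg (-1)) k with h | h <;> rw [h] <;>
    simp only [one_mul, neg_one_mul, map_neg, map_add, map_ofNat, phi2_tau] <;> decide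

lemma W11b (k : ℕ) : phi2 ((-1 : Rg (-1)) ^ k * (2 - tau (-1))) = 2 - t2 := by
  rcases neg_one_pow_eq_or (Rg (-1)) k with h | h <;> rw [h] <;>
    simp only [one_mul, neg_one_mul, map_neg, map_sub, map_ofNat, phi2_tau] <;> decide

lemma W12b (k : ℕ) :
    phi2 (1 + 2 * ((-1 : ℤ) : Rg (-1)) * (-1 : Rg (-1)) ^ k * tau (-1)) = 1 + 2 * t2 := by
  rcases neg_one_pow_eq_or (Rg (-1)) k with h | h <;> rw [h] <;>
    simp only [map_add, map_sub, map_mul, map_neg, map_one, map_ofNat, map_intCast,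
      phi2_tau] <;> decide

lemma W13b (k : ℕ) :
    phi2 (-1 + 2 * ((-1 : ℤ) : Rg (-1)) * (-1 : Rg (-1)) ^ k * tau (-1)) = -1 + 2 * t2 := by
  rcases neg_one_pow_eq_or (Rg (-1)) k with h | h <;> rw [h] <;>
    simp only [map_add, map_sub, map_mul, map_neg, map_one, map_ofNat, map_intCast,
      phi2_tau] <;> decide

/-- The digits in each set `D̃(j₁,j₂)` are pairwise incongruent modulo `τ²`:
if `τ² ∣ b − c` for digits `b, c ∈ D̃(j₁,j₂)`, then `b = c`. -/
theorem stmt10 (μ : ℤ) (hμ : μ = 1 ∨ μ = -1) (j₁ j₂ : ℕ) (hj₁ : j₁ < 4) (hj₂ : j₂ < 4)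
    (b c : Rg μ) (hb : b ∈ Dtil μ j₁ j₂) (hc : c ∈ Dtil μ j₁ j₂)
    (h : tau μ ^ 2 ∣ (b - c)) :
    b = c := by
  rcases hμ with rfl | rfl
  · obtain ⟨q, hq⟩ := h
    have hφ : phi1 b = phi1 c := by
      have h0 : phi1 b - phi1 c = 0 := by
        rw [← map_sub, hq, map_mul, map_pow, phi1_tau]
        have ht : t1 ^ 2 = 0 := by decide
        rw [ht, zero_mul]
      exact sub_eq_zero.mp h0
    have w1 : phi1 (0 : Rg 1) = 0 := map_zero _
    have w2 : phi1 (1 : Rg 1) = 1 := map_one _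
    have w3 : phi1 (-1 : Rg 1) = -1 := by rw [map_neg, map_one]
    have w4 : phi1 (2 : Rg 1) = 2 := by simp only [map_ofNat]
    have w5 : phi1 (-2 : Rg 1) = -2 := by rw [map_neg]; simp only [map_ofNat]
    have w6 : phi1 (1 + tau 1) = 1 + t1 := by rw [map_add, map_one, phi1_tau]
    have w7 : phi1 (1 - tau 1) = 1 - t1 := by rw [map_sub, map_one, phi1_tau]
    have w8 : phi1 (-1 + tau 1) = -1 + t1 := by rw [map_add, map_neg, map_one, phi1_tau]
    have w9 : phi1 (-1 - tau 1) = -1 - t1 := by rw [map_sub, map_neg, map_one, phi1_tau]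
    have w10 := W10a (j₁ / 2)
    have w11 := W11a j₁
    have w12 := W12a (j₂ / 2)
    have w13 := W13a j₂
    simp only [Dtil, Set.mem_insert_iff, Set.mem_singleton_iff] at hb hc
    rcases hb with rfl|rfl|rfl|rfl|rfl|rfl|rfl|rfl|rfl|rfl|rfl|rfl|rfl <;>
      rcases hc with rfl|rfl|rfl|rfl|rfl|rfl|rfl|rfl|rfl|rfl|rfl|rfl|rfl <;>
      first
        | rfl
        | (simp only [w1, w2, w3, w4, w5, w6, w7, w8, w9, w10, w11, w12, w13] at hφ
           exact absurd hφ (by decide))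
  · obtain ⟨q, hq⟩ := h
    have hφ : phi2 b = phi2 c := by
      have h0 : phi2 b - phi2 c = 0 := by
        rw [← map_sub, hq, map_mul, map_pow, phi2_tau]
        have ht : t2 ^ 2 = 0 := by decide
        rw [ht, zero_mul]
      exact sub_eq_zero.mp h0
    have w1 : phi2 (0 : Rg (-1)) = 0 := map_zero _
    have w2 : phi2 (1 : Rg (-1)) = 1 := map_one _
    have w3 : phi2 (-1 : Rg (-1)) = -1 := by rw [map_neg, map_one]
    have w4 : phi2 (2 : Rg (-1)) = 2 := by simp only [map_ofNat]
    have w5 : phi2 (-2 : Rg (-1)) = -2 := by rw [map_neg]; simp only [map_ofNat]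
    have w6 : phi2 (1 + tau (-1)) = 1 + t2 := by rw [map_add, map_one, phi2_tau]
    have w7 : phi2 (1 - tau (-1)) = 1 - t2 := by rw [map_sub, map_one, phi2_tau]
    have w8 : phi2 (-1 + tau (-1)) = -1 + t2 := by rw [map_add, map_neg, map_one, phi2_tau]
    have w9 : phi2 (-1 - tau (-1)) = -1 - t2 := by rw [map_sub, map_neg, map_one, phi2_tau]
    have w10 := W10b (j₁ / 2)
    have w11 := W11b j₁
    have w12 := W12b (j₂ / 2)
    have w13 := W13b j₂
    simp only [Dtil, Set.mem_insert_iff, Set.mem_singleton_iff] at hb hc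
    rcases hb with rfl|rfl|rfl|rfl|rfl|rfl|rfl|rfl|rfl|rfl|rfl|rfl|rfl <;>
      rcases hc with rfl|rfl|rfl|rfl|rfl|rfl|rfl|rfl|rfl|rfl|rfl|rfl|rfl <;>
      first
        | rfl
        | (simp only [w1, w2, w3, w4, w5, w6, w7, w8, w9, w10, w11, w12, w13] at hφ
           exact absurd hφ (by decide))
end

section
/- For every j₁, j₂ ∈ {0,1,2,3} and every α ∈ R that is not divisible by τ, there exists a digit c ∈ D̃(j₁,j₂) such that τ² divides α − c in R. -/
open Polynomial

/-!
Modulo `τ²` the defining relation `τ⁴ = μτ³ + 2μτ - 4` collapses to `4 = 2μτ`, whence `8 = 0`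
and `2τ = 4` in `R/τ²R`. Hence every class is `a + bτ` with `0 ≤ a < 8`, `b ∈ {0, 1}`, and the
signs `(-1)^j` in the digits do not change their classes, since `2(2 ± τ) = 2(2μτ) = 0` there.
The classes with `a ∈ {0, 4}` are divisible by `τ`; each of the other twelve is the class of a
digit.
-/
section TwoTorsion

variable {S : Type*} [CommRing S]

theorem neg_one_pow_mul_of_two_mul_eq_zero {y : S} (hy : 2 * y = 0) (k : ℕ) :
    (-1) ^ k * y = y := by
  rcases Nat.even_or_odd k with hk | hk
  · rw [hk.neg_one_pow, one_mul]
  · rw [hk.neg_one_pow]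
    linear_combination -hy

theorem exists_int_repr_of_eight_eq_zero {t : S} (h8 : (8 : S) = 0) (h2t : 2 * t = 4)
    (a b : ℤ) : ∃ a₀ b₀ : ℤ, 0 ≤ a₀ ∧ a₀ < 8 ∧ 0 ≤ b₀ ∧ b₀ < 2 ∧
      (a : S) + b * t = a₀ + b₀ * t := by
  refine ⟨(a + 4 * (b / 2)) % 8, b % 2, Int.emod_nonneg _ (by norm_num),
    Int.emod_lt_of_pos _ (by norm_num), Int.emod_nonneg _ (by norm_num),
    Int.emod_lt_of_pos _ (by norm_num), ?_⟩
  have ha : ((a + 4 * (b / 2) : ℤ) : S) = ((8 * ((a + 4 * (b / 2)) / 8)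
      + (a + 4 * (b / 2)) % 8 : ℤ) : S) := by
    rw [Int.mul_ediv_add_emod]
  have hb : (b : S) = ((2 * (b / 2) + b % 2 : ℤ) : S) := by
    rw [Int.mul_ediv_add_emod]
  push_cast at ha hb
  linear_combination ha + t * hb + ((a + 4 * (b / 2)) / 8 : ℤ) * h8 + (b / 2 : ℤ) * h2t

end TwoTorsion

theorem tau_pow_four_sub (μ : ℤ) :
    tau μ ^ 4 - μ * tau μ ^ 3 - 2 * μ * tau μ + 4 = 0 := by
  have h : aeval (tau μ) (P μ) = 0 := by
    rw [tau, AdjoinRoot.aeval_eq, AdjoinRoot.mk_self]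
  simpa [P, map_ofNat] using h

theorem exists_tau_sq_dvd_sub_int_add_int_mul (μ : ℤ) (α : Rg μ) :
    ∃ a b : ℤ, tau μ ^ 2 ∣ α - (a + b * tau μ) := by
  induction α using AdjoinRoot.induction_on with | _ p
  have hX : X ^ 2 ∣ p - (C (p.coeff 0) + C (p.coeff 1) * X) := by
    rw [X_pow_dvd_iff]
    intro d hd
    interval_cases d <;> simp only [coeff_sub, coeff_add, coeff_C, coeff_C_mul_X] <;> simp
  refine ⟨p.coeff 0, p.coeff 1, ?_⟩
  simpa [tau, ← AdjoinRoot.aeval_eq] using map_dvd (AdjoinRoot.mk (P μ)) hX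

noncomputable abbrev modTauSq (μ : ℤ) : Rg μ →+* Rg μ ⧸ Ideal.span {tau μ ^ 2} :=
  Ideal.Quotient.mk _

theorem modTauSq_eq_iff {μ : ℤ} {x y : Rg μ} :
    modTauSq μ x = modTauSq μ y ↔ tau μ ^ 2 ∣ x - y := by
  rw [Ideal.Quotient.eq, Ideal.mem_span_singleton]

theorem modTauSq_tau_sq (μ : ℤ) : modTauSq μ (tau μ) ^ 2 = 0 := by
  rw [← map_pow, Ideal.Quotient.eq_zero_iff_mem]
  exact Ideal.subset_span rfl

theorem tau_dvd_of_modTauSq_dvd {μ : ℤ} {α : Rg μ}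
    (h : modTauSq μ (tau μ) ∣ modTauSq μ α) : tau μ ∣ α := by
  obtain ⟨w, hw⟩ := h
  obtain ⟨w, rfl⟩ := Ideal.Quotient.mk_surjective w
  obtain ⟨v, hv⟩ := modTauSq_eq_iff.mp (hw.trans (map_mul _ _ _).symm)
  exact ⟨w + tau μ * v, by linear_combination hv⟩

theorem modTauSq_four (μ : ℤ) :
    (4 : Rg μ ⧸ Ideal.span {tau μ ^ 2}) = 2 * μ * modTauSq μ (tau μ) := by
  have hP := congrArg (modTauSq μ) (tau_pow_four_sub μ)
  simp only [map_sub, map_add, map_mul, map_pow, map_intCast, map_ofNat, map_zero] at hP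
  linear_combination hP - (modTauSq μ (tau μ) ^ 2 - μ * modTauSq μ (tau μ)) * modTauSq_tau_sq μ

theorem modTauSq_eight (μ : ℤ) : (8 : Rg μ ⧸ Ideal.span {tau μ ^ 2}) = 0 := by
  linear_combination
    (2 + μ * modTauSq μ (tau μ)) * modTauSq_four μ + 2 * μ ^ 2 * modTauSq_tau_sq μ

theorem two_mul_modTauSq_tau {μ : ℤ} (hμ : μ = 1 ∨ μ = -1) :
    2 * modTauSq μ (tau μ) = 4 := by
  have h4 := modTauSq_four μ
  rcases hμ with rfl | rfl
  · linear_combination -h4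
  · push_cast at h4
    linear_combination h4 - modTauSq_eight (-1)

theorem modTauSq_neg_one_pow_mul_two_add_tau {μ : ℤ} (hμ : μ = 1 ∨ μ = -1) (k : ℕ) :
    modTauSq μ ((-1) ^ k * (2 + tau μ)) = 2 + modTauSq μ (tau μ) := by
  simpa [map_ofNat] using neg_one_pow_mul_of_two_mul_eq_zero
    (by linear_combination two_mul_modTauSq_tau hμ + modTauSq_eight μ) k

theorem modTauSq_neg_one_pow_mul_two_sub_tau {μ : ℤ} (hμ : μ = 1 ∨ μ = -1) (k : ℕ) :
    modTauSq μ ((-1) ^ k * (2 - tau μ)) = 2 - modTauSq μ (tau μ) := by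
  simpa [map_ofNat] using neg_one_pow_mul_of_two_mul_eq_zero
    (by linear_combination -two_mul_modTauSq_tau hμ) k

theorem modTauSq_add_two_mul_neg_one_pow_mul_tau {μ : ℤ} (x : Rg μ) (k : ℕ) :
    modTauSq μ (x + 2 * μ * (-1) ^ k * tau μ) = modTauSq μ x + 4 := by
  have h := neg_one_pow_mul_of_two_mul_eq_zero (y := (4 : Rg μ ⧸ Ideal.span {tau μ ^ 2}))
    (by linear_combination modTauSq_eight μ) k
  simp only [map_add, map_mul, map_pow, map_neg, map_one, map_ofNat, map_intCast]
  linear_combination h - (-1) ^ k * modTauSq_four μ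

theorem exists_mem_Dtil_modTauSq_eq {μ : ℤ} (hμ : μ = 1 ∨ μ = -1) (j₁ j₂ : ℕ) {a b : ℤ}
    (ha₀ : 0 ≤ a) (ha₈ : a < 8) (hb₀ : 0 ≤ b) (hb₂ : b < 2)
    (hndvd : ¬ modTauSq μ (tau μ) ∣ a + b * modTauSq μ (tau μ)) :
    ∃ c ∈ Dtil μ j₁ j₂, modTauSq μ c = a + b * modTauSq μ (tau μ) := by
  have h8 := modTauSq_eight μ
  have h2t := two_mul_modTauSq_tau hμ
  interval_cases a <;> interval_cases b <;> push_cast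
  · exact absurd ⟨0, by simp⟩ hndvd
  · exact absurd ⟨1, by simp⟩ hndvd
  · exact ⟨1, by simp [Dtil], by simp⟩
  · exact ⟨1 + tau μ, by simp [Dtil], by simp⟩
  · exact ⟨2, by simp [Dtil], by simp [map_ofNat]⟩
  · exact ⟨(-1) ^ (j₁ / 2) * (2 + tau μ), by simp [Dtil],
      by rw [modTauSq_neg_one_pow_mul_two_add_tau hμ]; ring⟩
  · exact ⟨-1 + 2 * μ * (-1) ^ j₂ * tau μ, by simp [Dtil],
      by rw [modTauSq_add_two_mul_neg_one_pow_mul_tau]; norm_num⟩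
  · exact ⟨-1 - tau μ, by simp [Dtil],
      by simp only [map_sub, map_neg, map_one]; linear_combination -h2t - h8⟩
  · exact absurd ⟨2, by push_cast; linear_combination -h2t⟩ hndvd
  · exact absurd ⟨3, by push_cast; linear_combination -h2t⟩ hndvd
  · exact ⟨1 + 2 * μ * (-1) ^ (j₂ / 2) * tau μ, by simp [Dtil],
      by rw [modTauSq_add_two_mul_neg_one_pow_mul_tau]; norm_num⟩
  · exact ⟨1 - tau μ, by simp [Dtil],
      by simp only [map_sub, map_one]; linear_combination -h2t - h8⟩
  · exact ⟨-2, by simp [Dtil], by simp only [map_neg, map_ofNat _ 2]; linear_combination -h8⟩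
  · exact ⟨(-1) ^ j₁ * (2 - tau μ), by simp [Dtil],
      by rw [modTauSq_neg_one_pow_mul_two_sub_tau hμ]; linear_combination -h2t - h8⟩
  · exact ⟨-1, by simp [Dtil], by simp only [map_neg, map_one]; linear_combination -h8⟩
  · exact ⟨-1 + tau μ, by simp [Dtil],
      by simp only [map_add, map_neg, map_one]; linear_combination -h8⟩

theorem stmt11_general (μ : ℤ) (hμ : μ = 1 ∨ μ = -1) (j₁ j₂ : ℕ)
    (α : Rg μ) (hα : ¬ tau μ ∣ α) :
    ∃ c ∈ Dtil μ j₁ j₂, tau μ ^ 2 ∣ (α - c) := by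
  obtain ⟨a, b, hab⟩ := exists_tau_sq_dvd_sub_int_add_int_mul μ α
  obtain ⟨a₀, b₀, ha₀, ha₈, hb₀, hb₂, hrepr⟩ := exists_int_repr_of_eight_eq_zero
    (modTauSq_eight μ) (two_mul_modTauSq_tau hμ) a b
  have hα' : modTauSq μ α = a₀ + b₀ * modTauSq μ (tau μ) := by
    rw [modTauSq_eq_iff.mpr hab, ← hrepr]
    simp
  obtain ⟨c, hc, hc'⟩ := exists_mem_Dtil_modTauSq_eq hμ j₁ j₂ ha₀ ha₈ hb₀ hb₂
    (hα' ▸ mt tau_dvd_of_modTauSq_dvd hα)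
  exact ⟨c, hc, modTauSq_eq_iff.mp (hα'.trans hc'.symm)⟩

/-- For each digit set `D̃(j₁,j₂)` and each `α ∈ R` not divisible by `τ`, there is a
digit `c ∈ D̃(j₁,j₂)` with `τ² ∣ α − c`. -/
theorem stmt11 (μ : ℤ) (hμ : μ = 1 ∨ μ = -1) (j₁ j₂ : ℕ) (hj₁ : j₁ < 4) (hj₂ : j₂ < 4)
    (α : Rg μ) (hα : ¬ tau μ ∣ α) :
    ∃ c ∈ Dtil μ j₁ j₂, tau μ ^ 2 ∣ (α - c) :=
  stmt11_general μ hμ j₁ j₂ α hα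
end

section
/- Every complex root of the polynomial X^4 − μ·X^3 − 2μ·X + 4 has absolute value √2; that is, for every z ∈ ℂ with z^4 − μ·z^3 − 2μ·z + 4 = 0 one has |z| = √2. -/
/-!
For `μ² < 2` the quartic `X⁴ - μX³ - 2μX + 4` splits over `ℝ` as `(X² + aX + 2)(X² + bX + 2)`,
where `a, b` are the roots of `t² + μt - 4`. Each of `a, b` satisfies `(a² - 4)² = μ²a² < 2a²`,
i.e. `2 < a² < 8`, so both quadratic factors have negative discriminant. A non-real root of a
real quadratic `X² + pX + q` is conjugate to the other root, so its squared norm is the product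
of the roots, `q = 2`.
-/

open ComplexConjugate

lemma Complex.norm_eq_sqrt_of_quadratic_eq_zero {b c : ℝ} (hdisc : b ^ 2 < 4 * c) {z : ℂ}
    (hz : z ^ 2 + b * z + c = 0) : ‖z‖ = √c := by
  have hconj : conj z ^ 2 + b * conj z + c = 0 := by
    simpa using congrArg conj hz
  have hfac : (z - conj z) * (z + conj z + b) = 0 := by
    linear_combination hz - hconj
  rcases mul_eq_zero.1 hfac with hreal | hsum
  · obtain ⟨x, rfl⟩ : ∃ x : ℝ, z = x :=
      Complex.conj_eq_iff_real.1 (sub_eq_zero.1 hreal).symm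
    have hx : x ^ 2 + b * x + c = 0 := by exact_mod_cast hz
    nlinarith [sq_nonneg (2 * x + b)]
  · have hprod : z * conj z = c := by linear_combination z * hsum - hz
    rw [Complex.mul_conj, ← Complex.sq_norm] at hprod
    rw [← Real.sqrt_sq (norm_nonneg z), ← Complex.ofReal_inj.1 hprod]

lemma sq_lt_eight_of_sq_add_mul_sub_four_eq_zero {μ a : ℝ} (hμ : μ ^ 2 < 2)
    (ha : a ^ 2 + μ * a - 4 = 0) : a ^ 2 < 8 := by
  have hsq : (a ^ 2 - 4) ^ 2 = μ ^ 2 * a ^ 2 := by linear_combination (a ^ 2 - 4 - μ * a) * ha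
  nlinarith [mul_le_mul_of_nonneg_right hμ.le (sq_nonneg a)]

lemma exists_sq_add_mul_sub_four_eq_zero (μ : ℝ) : ∃ a : ℝ, a ^ 2 + μ * a - 4 = 0 := by
  refine ⟨(-μ + √(μ ^ 2 + 16)) / 2, ?_⟩
  have hs : √(μ ^ 2 + 16) ^ 2 = μ ^ 2 + 16 := Real.sq_sqrt (by positivity)
  linear_combination hs / 4

lemma Complex.norm_eq_sqrt_two_of_quartic_eq_zero {μ : ℝ} (hμ : μ ^ 2 < 2) {z : ℂ}
    (hz : z ^ 4 - μ * z ^ 3 - 2 * μ * z + 4 = 0) : ‖z‖ = √2 := by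
  obtain ⟨a, ha⟩ := exists_sq_add_mul_sub_four_eq_zero μ
  set b := -μ - a with hb
  have hb' : b ^ 2 + μ * b - 4 = 0 := by linear_combination ha
  have hfac : (z ^ 2 + a * z + 2) * (z ^ 2 + b * z + 2) = 0 := by
    have haC : (a : ℂ) ^ 2 + μ * a - 4 = 0 := by exact_mod_cast ha
    push_cast [hb]
    linear_combination hz - z ^ 2 * haC
  have hdisc {c : ℝ} (hc : c ^ 2 + μ * c - 4 = 0) : c ^ 2 < 4 * 2 := by
    linarith [sq_lt_eight_of_sq_add_mul_sub_four_eq_zero hμ hc]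
  rcases mul_eq_zero.1 hfac with h | h
  · exact Complex.norm_eq_sqrt_of_quadratic_eq_zero (hdisc ha) (by exact_mod_cast h)
  · exact Complex.norm_eq_sqrt_of_quadratic_eq_zero (hdisc hb') (by exact_mod_cast h)

/-- Every complex root of `X^4 − μ·X^3 − 2μ·X + 4` (with `μ = ±1`) has absolute
value `√2`. -/
theorem stmt13 (μ : ℤ) (hμ : μ = 1 ∨ μ = -1) (z : ℂ)
    (hz : z ^ 4 - (μ : ℂ) * z ^ 3 - 2 * (μ : ℂ) * z + 4 = 0) :
    ‖z‖ = Real.sqrt 2 := by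
  have hμsq : (μ : ℝ) ^ 2 < 2 := by rcases hμ with rfl | rfl <;> norm_num
  exact Complex.norm_eq_sqrt_two_of_quartic_eq_zero hμsq (by exact_mod_cast hz)
end
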